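/- arXiv:2404.17954 — 8 statements merged into one kernel-verified Lean document; each statement's English description precedes it below -/
import Mathlib

section
/- Let G = (V, E) be a finite DAG, let D be a chain decomposition of G, and let C be a chain of D. If a vertex v has two outgoing edges (v, t1) and (v, t2) with t1 ≠ t2, where both t1 and t2 lie on the chain C and t1 occurs earlier than t2 in C, then the edge (v, t2) is transitive. Consequently, for each vertex v and each chain C of D, at most one non-transitive outgoing edge of v has its target on C. -/
variable {V : Type*}

/-- An edge `(v, t)` is transitive if there is a vertex `w` with an edge `(v, w)`
and `t` strictly reachable from `w`. -/
def IsTransEdge (E : V → V → Prop) (v t : V) : Prop :=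
  E v t ∧ ∃ w, E v w ∧ Relation.TransGen E w t

/-- A chain: a finite sequence of distinct vertices, each strictly reaching the next. -/
def IsChainList (E : V → V → Prop) (c : List V) : Prop :=
  c.Nodup ∧ c.Chain' (Relation.TransGen E)

/-- A chain decomposition: a finite family of chains, each vertex appearing on exactly one. -/
def IsChainDecomp (E : V → V → Prop) (D : Finset (List V)) : Prop :=
  (∀ c ∈ D, IsChainList E c) ∧ ∀ v : V, ∃! c, c ∈ D ∧ v ∈ c

section

variable {E : V → V → Prop}

theorem IsTransEdge.of_transGen {v s t : V} (hs : E v s) (ht : E v t)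
    (hst : Relation.TransGen E s t) : IsTransEdge E v t :=
  ⟨ht, s, hs, hst⟩

namespace IsChainList

theorem transGen_get_of_lt {c : List V} (hc : IsChainList E c) {i j : Fin c.length}
    (hij : i < j) : Relation.TransGen E (c.get i) (c.get j) :=
  List.pairwise_iff_get.mp (List.isChain_iff_pairwise.mp hc.2) i j hij

theorem isTransEdge_of_get_lt {c : List V} (hc : IsChainList E c) {v : V}
    {i j : Fin c.length} (hij : i < j) (hi : E v (c.get i)) (hj : E v (c.get j)) :
    IsTransEdge E v (c.get j) :=
  .of_transGen hi hj (hc.transGen_get_of_lt hij)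

theorem eq_of_not_isTransEdge {c : List V} (hc : IsChainList E c) {v t₁ t₂ : V}
    (h₁ : E v t₁) (h₂ : E v t₂) (hn₁ : ¬ IsTransEdge E v t₁) (hn₂ : ¬ IsTransEdge E v t₂)
    (hm₁ : t₁ ∈ c) (hm₂ : t₂ ∈ c) : t₁ = t₂ := by
  obtain ⟨i, rfl⟩ := List.mem_iff_get.mp hm₁
  obtain ⟨j, rfl⟩ := List.mem_iff_get.mp hm₂
  rcases lt_trichotomy i j with hij | rfl | hji
  · exact absurd (hc.isTransEdge_of_get_lt hij h₁ h₂) hn₂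
  · rfl
  · exact absurd (hc.isTransEdge_of_get_lt hji h₂ h₁) hn₁

end IsChainList

end

theorem outgoing_nontransitive_edges_general (E : V → V → Prop)
    (D : Finset (List V)) (hD : IsChainDecomp E D)
    (C : List V) (hC : C ∈ D) :
    (∀ v t₁ t₂ : V, E v t₁ → E v t₂ → t₁ ≠ t₂ →
      (∃ i j : Fin C.length, i < j ∧ C.get i = t₁ ∧ C.get j = t₂) →
      IsTransEdge E v t₂) ∧
    (∀ v t₁ t₂ : V, E v t₁ → E v t₂ →
      ¬ IsTransEdge E v t₁ → ¬ IsTransEdge E v t₂ →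
      t₁ ∈ C → t₂ ∈ C → t₁ = t₂) := by
  have hchain : IsChainList E C := hD.1 C hC
  refine ⟨?_, fun v t₁ t₂ => hchain.eq_of_not_isTransEdge⟩
  rintro v _ _ h₁ h₂ - ⟨i, j, hij, rfl, rfl⟩
  exact hchain.isTransEdge_of_get_lt hij h₁ h₂

theorem outgoing_nontransitive_edges [Fintype V] (E : V → V → Prop)
    (hdag : ∀ v : V, ¬ Relation.TransGen E v v)
    (D : Finset (List V)) (hD : IsChainDecomp E D)
    (C : List V) (hC : C ∈ D) :
    (∀ v t₁ t₂ : V, E v t₁ → E v t₂ → t₁ ≠ t₂ →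
      (∃ i j : Fin C.length, i < j ∧ C.get i = t₁ ∧ C.get j = t₂) →
      IsTransEdge E v t₂) ∧
    (∀ v t₁ t₂ : V, E v t₁ → E v t₂ →
      ¬ IsTransEdge E v t₁ → ¬ IsTransEdge E v t₂ →
      t₁ ∈ C → t₂ ∈ C → t₁ = t₂) :=
  outgoing_nontransitive_edges_general E D hD C hC
end

section
/- Let G = (V, E) be a finite DAG and let D be a chain decomposition of G consisting of k chains. Then every vertex v of G has at most k non-transitive outgoing edges, and at most k non-transitive incoming edges. -/
variable {V : Type*}

lemma chain_rel_of_mem (E : V → V → Prop) {c : List V} (hc : IsChainList E c)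
    {a b : V} (ha : a ∈ c) (hb : b ∈ c) (hab : a ≠ b) :
    Relation.TransGen E a b ∨ Relation.TransGen E b a := by
  have hp : c.Pairwise (Relation.TransGen E) :=
    List.isChain_iff_pairwise.mp hc.2
  have hp' : c.Pairwise (fun a b => Relation.TransGen E a b ∨ Relation.TransGen E b a) :=
    hp.imp Or.inl
  haveI : Std.Symm (fun a b => Relation.TransGen E a b ∨ Relation.TransGen E b a) :=
    ⟨fun _ _ h => h.symm⟩
  exact hp'.forall ha hb hab

theorem nontransitive_degree_le_chains [Fintype V] (E : V → V → Prop)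
    (hdag : ∀ v : V, ¬ Relation.TransGen E v v)
    (D : Finset (List V)) (hD : IsChainDecomp E D)
    (k : ℕ) (hk : D.card = k) :
    ∀ v : V,
      {t : V | E v t ∧ ¬ IsTransEdge E v t}.ncard ≤ k ∧
      {s : V | E s v ∧ ¬ IsTransEdge E s v}.ncard ≤ k := by
  intro v
  obtain ⟨hchains, huniq⟩ := hD
  -- choose for each vertex its chain
  choose f hf hfu using fun u => (huniq u)
  subst hk
  have hcard : (↑D : Set (List V)).ncard = D.card := by
    simp [Set.ncard_coe_finset]
  constructor
  · rw [← hcard]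
    apply Set.ncard_le_ncard_of_injOn f
    · intro t ht
      exact (hf t).1
    · intro a ha b hb hab
      by_contra hne
      have hrel := chain_rel_of_mem E (hchains (f a) (hf a).1)
        (hf a).2 (by rw [hab]; exact (hf b).2) hne
      rcases hrel with h | h
      · exact hb.2 ⟨hb.1, a, ha.1, h⟩
      · exact ha.2 ⟨ha.1, b, hb.1, h⟩
  · rw [← hcard]
    apply Set.ncard_le_ncard_of_injOn f
    · intro s hs
      exact (hf s).1
    · intro a ha b hb hab
      by_contra hne
      have hrel := chain_rel_of_mem E (hchains (f a) (hf a).1)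
        (hf a).2 (by rw [hab]; exact (hf b).2) hne
      have key : ∀ x y : V, E x v → E y v → Relation.TransGen E x y →
          IsTransEdge E x v := by
        intro x y hx hy hxy
        obtain ⟨w, hxw, hwy⟩ := (Relation.TransGen.head'_iff).mp hxy
        exact ⟨hx, w, hxw, Relation.TransGen.trans_right hwy (Relation.TransGen.single hy)⟩
      rcases hrel with h | h
      · exact ha.2 (key a b ha.1 hb.1 h)
      · exact hb.2 (key b a hb.1 ha.1 h)
end

section
/- Let G = (V, E) be a finite DAG that admits a chain decomposition consisting of k chains. Then the number of non-transitive edges of G is at most k·|V|, i.e., |E_red| = |E| − |E_tr| ≤ k·|V|, where E_tr is the set of transitive edges of G and E_red = E − E_tr. -/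
variable {V : Type*}

lemma chain_comparable {E : V → V → Prop} {c : List V} (hc : IsChainList E c)
    {a b : V} (ha : a ∈ c) (hb : b ∈ c) (hab : a ≠ b) :
    Relation.TransGen E a b ∨ Relation.TransGen E b a := by
  have hp : c.Pairwise (Relation.TransGen E) := List.isChain_iff_pairwise.mp hc.2
  have hp' : c.Pairwise (fun a b => Relation.TransGen E a b ∨ Relation.TransGen E b a) :=
    hp.imp Or.inl
  haveI : Std.Symm (fun a b => Relation.TransGen E a b ∨ Relation.TransGen E b a) :=
    ⟨fun x y h => h.symm⟩
  exact hp'.forall ha hb hab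

theorem nontransitive_edges_le_chains_mul_card [Fintype V] (E : V → V → Prop)
    (hdag : ∀ v : V, ¬ Relation.TransGen E v v)
    (D : Finset (List V)) (hD : IsChainDecomp E D)
    (k : ℕ) (hk : D.card = k) :
    ({p : V × V | E p.1 p.2} \ {p : V × V | IsTransEdge E p.1 p.2}).ncard
      ≤ k * Fintype.card V := by
  classical
  have hch : ∀ v : V, ∃ c, c ∈ D ∧ v ∈ c := fun v => (hD.2 v).exists
  choose ch hchD hchm using hch
  set S := ({p : V × V | E p.1 p.2} \ {p : V × V | IsTransEdge E p.1 p.2}) with hS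
  have key : Set.InjOn (fun p : V × V => (p.1, ch p.2)) S := by
    rintro ⟨v, t⟩ hp ⟨v', t'⟩ hq h
    simp only [Prod.mk.injEq] at h
    obtain ⟨h1, h2⟩ := h
    subst h1
    by_contra hne
    have htt' : t ≠ t' := by simpa [Prod.ext_iff] using hne
    have ht : t ∈ ch t' := h2 ▸ hchm t
    have hcomp := chain_comparable (hD.1 _ (hchD t')) ht (hchm t') htt'
    obtain ⟨hpE, hpN⟩ := hp
    obtain ⟨hqE, hqN⟩ := hq
    cases hcomp with
    | inl h => exact hqN ⟨hqE, t, hpE, h⟩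
    | inr h => exact hpN ⟨hpE, t', hqE, h⟩
  have hmaps : ∀ p ∈ S, (fun p : V × V => (p.1, ch p.2)) p ∈
      ((Finset.univ ×ˢ D : Finset (V × List V)) : Set (V × List V)) := by
    intro p hp; simp [hchD]
  calc S.ncard ≤ ((Finset.univ ×ˢ D : Finset (V × List V)) : Set (V × List V)).ncard :=
        Set.ncard_le_ncard_of_injOn _ hmaps key (Finset.finite_toSet _)
    _ = Fintype.card V * k := by
        rw [Set.ncard_coe_finset, Finset.card_product, Finset.card_univ, hk]
    _ = k * Fintype.card V := Nat.mul_comm _ _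
end

section
/- Let G = (V, E) be a finite DAG with width w. Then the number of non-transitive edges of G is at most w·|V|, i.e., |E_red| = |E| − |E_tr| ≤ w·|V|, where E_tr is the set of transitive edges of G and E_red = E − E_tr. -/
/-!
The heads of the non-transitive edges leaving a vertex `v` form an antichain: if one of them, `a`,
reached another one, `b`, then `v → a ⇝ b` would make the edge `(v, b)` transitive. So each vertex
is the tail of at most `w` non-transitive edges, and summing over the tails gives `w · |V|`.
-/

variable {V : Type*}

/-- An antichain: a finite set of pairwise mutually unreachable vertices. -/
def IsAntichainSet (E : V → V → Prop) (A : Finset V) : Prop :=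
  ∀ u ∈ A, ∀ u' ∈ A, u ≠ u' →
    ¬ Relation.ReflTransGen E u u' ∧ ¬ Relation.ReflTransGen E u' u

/-- `w` is the width of the DAG: the maximum cardinality of an antichain. -/
def IsWidth (E : V → V → Prop) (w : ℕ) : Prop :=
  (∃ A : Finset V, IsAntichainSet E A ∧ A.card = w) ∧
    ∀ A : Finset V, IsAntichainSet E A → A.card ≤ w

theorem Set.ncard_setOf_prod_le_mul_card {α β : Type*} [Fintype α] (R : α → β → Prop) {n : ℕ}
    (h : ∀ a, {b | R a b}.ncard ≤ n) :
    {p : α × β | R p.1 p.2}.ncard ≤ n * Fintype.card α := by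
  have hunion : {p : α × β | R p.1 p.2} = ⋃ a, Prod.mk a '' {b | R a b} := by
    ext ⟨a, b⟩
    simp
  calc {p : α × β | R p.1 p.2}.ncard
      ≤ ∑ a, (Prod.mk a '' {b | R a b}).ncard := hunion ▸ Set.ncard_iUnion_le_of_fintype _
    _ = ∑ a, {b | R a b}.ncard := by
      simp only [Set.ncard_image_of_injective _ (Prod.mk_right_injective _)]
    _ ≤ ∑ _a : α, n := Finset.sum_le_sum fun a _ => h a
    _ = n * Fintype.card α := by simp [mul_comm]

theorem IsWidth.ncard_le [Finite V] {E : V → V → Prop} {w : ℕ} (hw : IsWidth E w) {s : Set V}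
    (hs : s.Pairwise fun u u' => ¬ Relation.ReflTransGen E u u') :
    s.ncard ≤ w := by
  rw [Set.ncard_eq_toFinset_card s (Set.toFinite s)]
  refine hw.2 _ fun u hu u' hu' hne => ⟨?_, ?_⟩
  · exact hs (by simpa using hu) (by simpa using hu') hne
  · exact hs (by simpa using hu') (by simpa using hu) hne.symm

theorem pairwise_not_reflTransGen_of_not_isTransEdge (E : V → V → Prop) (v : V) :
    {t | E v t ∧ ¬ IsTransEdge E v t}.Pairwise fun a b => ¬ Relation.ReflTransGen E a b := by
  intro a ha b hb hab hreach
  rcases Relation.reflTransGen_iff_eq_or_transGen.mp hreach with rfl | hpath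
  · exact hab rfl
  · exact hb.2 ⟨hb.1, a, ha.1, hpath⟩

theorem nontransitive_edges_le_width_mul_card_general [Fintype V] (E : V → V → Prop)
    (w : ℕ) (hw : IsWidth E w) :
    ({p : V × V | E p.1 p.2} \ {p : V × V | IsTransEdge E p.1 p.2}).ncard
      ≤ w * Fintype.card V :=
  Set.ncard_setOf_prod_le_mul_card (fun v t => E v t ∧ ¬ IsTransEdge E v t) fun v =>
    hw.ncard_le (pairwise_not_reflTransGen_of_not_isTransEdge E v)

theorem nontransitive_edges_le_width_mul_card [Fintype V] (E : V → V → Prop)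
    (hdag : ∀ v : V, ¬ Relation.TransGen E v v)
    (w : ℕ) (hw : IsWidth E w) :
    ({p : V × V | E p.1 p.2} \ {p : V × V | IsTransEdge E p.1 p.2}).ncard
      ≤ w * Fintype.card V :=
  nontransitive_edges_le_width_mul_card_general E w hw
end

section
/- Let G = (V, E) be a finite DAG, let E_tr be the set of transitive edges of G, and let E_red = E − E_tr be the set of non-transitive edges. Then the graph G_red = (V, E_red) has the same reachability relation as G: for all vertices x and y, y is reachable from x in G_red if and only if y is reachable from x in G. In particular, any DAG can be reduced to a smaller DAG that has the same transitive closure. -/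
variable {V : Type*}

open Relation

private lemma key_edge [Fintype V] (E : V → V → Prop)
    (hdag : ∀ v : V, ¬ Relation.TransGen E v v) :
    ∀ n v t, E v t → ({u | ReflTransGen E v u ∧ ReflTransGen E u t}).ncard ≤ n →
      ReflTransGen (fun a b => E a b ∧ ¬ IsTransEdge E a b) v t := by
  intro n
  induction n using Nat.strong_induction_on with
  | _ n IH =>
    intro v t hvt hcard
    by_cases htr : IsTransEdge E v t
    · obtain ⟨-, w, hvw, hwt⟩ := htr
      have hvt_rtg : ReflTransGen E v t := ReflTransGen.single hvt
      -- a general step: any edge (a,b) whose interval is strictly inside that of (v,t)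
      -- can be realized by reduced edges, by the strong induction hypothesis
      have step : ∀ a b, E a b → ReflTransGen E v a → ReflTransGen E b t →
          (∃ z, (ReflTransGen E v z ∧ ReflTransGen E z t) ∧
            ¬ (ReflTransGen E a z ∧ ReflTransGen E z b)) →
          ReflTransGen (fun a b => E a b ∧ ¬ IsTransEdge E a b) a b := by
        rintro a b hab hva hbt ⟨z, hz, hnz⟩
        have hsub : {u | ReflTransGen E a u ∧ ReflTransGen E u b} ⊆
            {u | ReflTransGen E v u ∧ ReflTransGen E u t} := by
          rintro u ⟨hau, hub⟩
          exact ⟨hva.trans hau, hub.trans hbt⟩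
        have hss : {u | ReflTransGen E a u ∧ ReflTransGen E u b} ⊂
            {u | ReflTransGen E v u ∧ ReflTransGen E u t} :=
          (Set.ssubset_iff_of_subset hsub).mpr ⟨z, hz, hnz⟩
        have hlt := Set.ncard_lt_ncard hss (Set.toFinite _)
        exact IH _ (lt_of_lt_of_le hlt hcard) a b hab le_rfl
      -- edges strictly after v on a path inside the interval
      have C : ∀ a (h : TransGen E a t), TransGen E v a →
          ReflTransGen (fun a b => E a b ∧ ¬ IsTransEdge E a b) a t := by
        intro a h
        induction h using Relation.TransGen.head_induction_on with
        | single hab =>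
          intro hva
          exact step _ t hab hva.to_reflTransGen ReflTransGen.refl
            ⟨v, ⟨ReflTransGen.refl, hvt_rtg⟩,
              fun ⟨hav, _⟩ => hdag _ (TransGen.trans_right hav hva)⟩
        | head hac hct IH' =>
          intro hva
          have h1 := step _ _ hac hva.to_reflTransGen hct.to_reflTransGen
            ⟨v, ⟨ReflTransGen.refl, hvt_rtg⟩,
              fun ⟨hav, _⟩ => hdag _ (TransGen.trans_right hav hva)⟩
          exact h1.trans (IH' (hva.tail hac))
      have h1 := step v w hvw ReflTransGen.refl hwt.to_reflTransGen
        ⟨t, ⟨hvt_rtg, ReflTransGen.refl⟩,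
          fun ⟨_, htw⟩ => hdag _ (TransGen.trans_right htw hwt)⟩
      exact h1.trans (C w hwt (TransGen.single hvw))
    · exact ReflTransGen.single ⟨hvt, htr⟩

theorem nontransitive_reduction_preserves_reachability [Fintype V] (E : V → V → Prop)
    (hdag : ∀ v : V, ¬ Relation.TransGen E v v) :
    ∀ x y : V,
      Relation.ReflTransGen (fun a b => E a b ∧ ¬ IsTransEdge E a b) x y ↔
        Relation.ReflTransGen E x y := by
  intro x y
  constructor
  · exact fun h => ReflTransGen.mono (fun a b hab => hab.1) _ _ h
  · intro h
    induction h with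
    | refl => exact ReflTransGen.refl
    | tail h' e ih => exact ih.trans (key_edge E hdag _ _ _ e le_rfl)
end

section
/- Let G = (V, E) be a finite DAG, let D be a chain decomposition of G, and let E' ⊆ E be a subset of the edges such that: for every edge (v, t) ∈ E there exists an edge (v, t') ∈ E' whose target t' lies on the same chain of D as t and occurs at a position in that chain less than or equal to the position of t (the edge kept for each chain points to the lowest reachable point of that chain). Then the reduced graph (V, E') has the same reachability relation as G: for all vertices x and y, y is reachable from x in (V, E') if and only if y is reachable from x in G. -/
variable {V : Type*}

theorem reduction_keeping_lowest_chain_targets_preserves_reachability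
    [Fintype V] (E E' : V → V → Prop)
    (hdag : ∀ v : V, ¬ Relation.TransGen E v v)
    (D : Finset (List V)) (hD : IsChainDecomp E D)
    (hsub : ∀ x y : V, E' x y → E x y)
    (hkeep : ∀ v t : V, E v t → ∃ (t' : V) (c : List V), c ∈ D ∧ E' v t' ∧
      ∃ i j : Fin c.length, i ≤ j ∧ c.get i = t' ∧ c.get j = t) :
    ∀ x y : V,
      Relation.ReflTransGen E' x y ↔ Relation.ReflTransGen E x y := by
  -- chain lemma: entries of a chain are related by ReflTransGen E
  have hchain : ∀ c ∈ D, ∀ i j : Fin c.length, i ≤ j →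
      Relation.ReflTransGen E (c.get i) (c.get j) := by
    intro c hc i j hij
    rcases lt_or_eq_of_le hij with h | h
    · have hcl := (hD.1 c hc).2
      haveI : IsTrans V (Relation.TransGen E) := ⟨fun _ _ _ => Relation.TransGen.trans⟩
      have hp := List.isChain_iff_pairwise.mp hcl
      have := List.pairwise_iff_get.mp hp i j h
      exact this.to_reflTransGen
    · rw [h]
  -- well-foundedness of the reverse strict reachability
  have hwf : WellFounded (fun a b : V => Relation.TransGen E b a) := by
    haveI : IsTrans V (fun a b : V => Relation.TransGen E b a) :=
      ⟨fun _ _ _ h1 h2 => Relation.TransGen.trans h2 h1⟩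
    haveI : IsIrrefl V (fun a b : V => Relation.TransGen E b a) := ⟨hdag⟩
    exact Finite.wellFounded_of_trans_of_irrefl _
  have main : ∀ x y : V, Relation.ReflTransGen E x y → Relation.ReflTransGen E' x y := by
    intro x
    induction x using hwf.induction with
    | _ x ih =>
      intro y hxy
      rcases Relation.ReflTransGen.cases_head hxy with rfl | ⟨t, hxt, hty⟩
      · exact Relation.ReflTransGen.refl
      · obtain ⟨t', c, hc, hE', i, j, hij, hi, hj⟩ := hkeep x t hxt
        have ht't : Relation.ReflTransGen E t' t := by
          rw [← hi, ← hj]; exact hchain c hc i j hij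
        have ht'y : Relation.ReflTransGen E t' y := ht't.trans hty
        have hlt : Relation.TransGen E x t' := Relation.TransGen.single (hsub _ _ hE')
        exact Relation.ReflTransGen.head hE' (ih t' hlt y ht'y)
  intro x y
  exact ⟨fun h => Relation.ReflTransGen.mono (fun a b => hsub a b) x y h, main x y⟩
end

section
/- Let G = (V, E) be a finite DAG with a chain decomposition D, let u be the vertex at position j of a chain C = (c_0, c_1, ..., c_m) of D, and let v be any vertex of G. Then u is reachable from v if and only if the set I = { i | c_i is reachable from v } is nonempty and its minimum satisfies min I ≤ j. (This is the correctness of answering a reachability query in constant time from the indexing scheme: s can reach t exactly when the lowest point of t's chain that s can reach is less than or equal to t's position.) -/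
variable {V : Type*}

private lemma chain_reach {E : V → V → Prop} {l : List V}
    (h : l.Chain' (Relation.TransGen E)) {i j : ℕ} (hij : i ≤ j) (hjl : j < l.length)
    (hil : i < l.length) :
    Relation.ReflTransGen E (l[i]'hil) (l[j]'hjl) := by
  induction j with
  | zero =>
    interval_cases i
    exact Relation.ReflTransGen.refl
  | succ n ih =>
    rcases Nat.lt_or_ge i (n+1) with hlt | hge
    · have hn : n < l.length := lt_of_lt_of_le (Nat.lt_succ_self n) (Nat.le_of_lt hjl)
      have h1 := ih (Nat.lt_succ_iff.mp hlt) hn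
      have h2 : Relation.TransGen E (l[n]'hn) (l[n+1]'hjl) := by
        unfold List.Chain' at h
        rw [List.isChain_iff_getElem] at h
        exact h n (by omega)
      exact h1.trans h2.to_reflTransGen
    · have : i = n + 1 := le_antisymm hij hge
      subst this
      exact Relation.ReflTransGen.refl

theorem indexing_scheme_query_correctness [Fintype V] (E : V → V → Prop)
    (hdag : ∀ v : V, ¬ Relation.TransGen E v v)
    (D : Finset (List V)) (hD : IsChainDecomp E D)
    (C : List V) (hC : C ∈ D)
    (j : ℕ) (hj : j < C.length) (u v : V) (hu : u = C[j]'hj) :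
    Relation.ReflTransGen E v u ↔
      ({i : ℕ | ∃ h : i < C.length, Relation.ReflTransGen E v (C[i]'h)}.Nonempty ∧
        sInf {i : ℕ | ∃ h : i < C.length, Relation.ReflTransGen E v (C[i]'h)} ≤ j) := by
  have hchain := (hD.1 C hC).2
  constructor
  · intro hvu
    have hjmem : j ∈ {i : ℕ | ∃ h : i < C.length, Relation.ReflTransGen E v (C[i]'h)} :=
      ⟨hj, hu ▸ hvu⟩
    exact ⟨⟨j, hjmem⟩, Nat.sInf_le hjmem⟩
  · rintro ⟨hne, hle⟩
    obtain ⟨hlt, hreach⟩ := Nat.sInf_mem hne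
    exact hu ▸ hreach.trans (chain_reach hchain hle hj hlt)
end

section
/- Let G = (V, E) be a finite DAG with |V| = n, and let B be the bipartite graph with parts V1 = {x_v : v ∈ V} and V2 = {y_v : v ∈ V}, where x_u is adjacent to y_w if and only if w is strictly reachable from u in G. If M is a maximum matching of B, then the width of G equals n − |M| (the correctness of Fulkerson's method for computing the width of a DAG). -/
variable {V : Type*}

/-- A matching of the bipartite graph whose parts are two copies of `V` and whose
edges join `u` to `w` exactly when `w` is strictly reachable from `u`:
a set of such edges, pairwise disjoint in both endpoints. -/
def IsReachMatching (E : V → V → Prop) (M : Finset (V × V)) : Prop :=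
  (∀ p ∈ M, Relation.TransGen E p.1 p.2) ∧
    ∀ p ∈ M, ∀ q ∈ M, p ≠ q → p.1 ≠ q.1 ∧ p.2 ≠ q.2

/-!
For a strict order, an antichain `A` and a matching `M` always satisfy `|A| + |M| ≤ n`: send
`a ∈ A` to itself and a matched pair `(u, v)` to `v` if `u` lies above some element of `A`, and
to `u` otherwise; by transitivity this is injective, with image disjoint from `A`.

Conversely, Hall's theorem with `d` extra vertices adjacent to everything gives the deficiency
form of König's theorem: if `S` maximises `d = |S| - |N(S)|`, some matching has at least `n - d`
pairs. Taking `N(S)` to be the set of strict successors of `S`, the set `S \ N(S)` is an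
antichain with at least `d` elements.
-/

open Finset

def IsRelMatching {ι α : Type*} (r : ι → α → Prop) (M : Finset (ι × α)) : Prop :=
  (∀ p ∈ M, r p.1 p.2) ∧ Set.InjOn Prod.fst (M : Set (ι × α)) ∧
    Set.InjOn Prod.snd (M : Set (ι × α))

theorem IsAntichain.card_add_card_le_of_isRelMatching {α : Type*} [Fintype α]
    {r : α → α → Prop} [IsStrictOrder α r] {A : Finset α}
    {M : Finset (α × α)} (hA : IsAntichain r (A : Set α)) (hM : IsRelMatching r M) :
    #A + #M ≤ Fintype.card α := by
  classical
  obtain ⟨hrel, hfst, hsnd⟩ := hM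
  let above (u : α) : Prop := ∃ a ∈ A, a = u ∨ r a u
  let g (p : α × α) : α := if above p.1 then p.2 else p.1
  have head_above : ∀ p ∈ M, above p.1 → ∃ a ∈ A, r a p.2 := fun p hp ⟨a, ha, hau⟩ =>
    ⟨a, ha, hau.elim (· ▸ hrel p hp) (trans_of r · (hrel p hp))⟩
  have hgA : ∀ p ∈ M, g p ∉ A := by
    intro p hp hpA
    by_cases h : above p.1
    · obtain ⟨a, ha, hav⟩ := head_above p hp h
      simp only [g, if_pos h] at hpA
      exact hA ha hpA (fun h => irrefl_of r a (h ▸ hav)) hav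
    · simp only [g, if_neg h] at hpA
      exact h ⟨p.1, hpA, Or.inl rfl⟩
  have hg : Set.InjOn g M := by
    have head_ne_tail : ∀ p ∈ M, ∀ q : α × α, above p.1 → ¬ above q.1 → p.2 ≠ q.1 :=
      fun p hp q hpa hqa hpq => hqa <| by
        obtain ⟨a, ha, hav⟩ := head_above p hp hpa
        exact ⟨a, ha, Or.inr (hpq ▸ hav)⟩
    intro p hp q hq hpq
    by_cases hpa : above p.1 <;> by_cases hqa : above q.1 <;>
      simp only [g, hpa, hqa, if_true, if_false] at hpq
    · exact hsnd hp hq hpq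
    · exact absurd hpq (head_ne_tail p hp q hpa hqa)
    · exact absurd hpq.symm (head_ne_tail q hq p hqa hpa)
    · exact hfst hp hq hpq
  calc #A + #M = #(A ∪ M.image g) := by
        rw [card_union_of_disjoint, card_image_of_injOn hg]
        exact disjoint_right.2 fun x hx => by
          obtain ⟨p, hp, rfl⟩ := mem_image.1 hx
          exact hgA p hp
    _ ≤ Fintype.card α := card_le_univ _

theorem Finset.exists_isRelMatching_of_card_le_card_biUnion_add {ι α : Type*} [Fintype ι]
    [DecidableEq α] (t : ι → Finset α) (d : ℕ) (h : ∀ s : Finset ι, #s ≤ #(s.biUnion t) + d) :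
    ∃ M : Finset (ι × α), IsRelMatching (fun i a => a ∈ t i) M ∧ Fintype.card ι ≤ #M + d := by
  classical
  obtain ⟨f, hf, hft⟩ := (all_card_le_biUnion_card_iff_existsInjective'
      fun i => (t i).disjSum (univ : Finset (Fin d))).1 fun s => by
    rcases s.eq_empty_or_nonempty with rfl | ⟨i, hi⟩
    · simp
    calc #s ≤ #((s.biUnion t).disjSum (univ : Finset (Fin d))) := by simpa using h s
      _ ≤ _ := card_le_card fun x hx => by
        rcases x with a | j
        · obtain ⟨i', hi', ha⟩ := mem_biUnion.1 (inl_mem_disjSum.1 hx)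
          exact mem_biUnion.2 ⟨i', hi', inl_mem_disjSum.2 ha⟩
        · exact mem_biUnion.2 ⟨i, hi, inr_mem_disjSum.2 (mem_univ j)⟩
  set M := (univ ×ˢ univ.biUnion t).filter fun p => f p.1 = .inl p.2
  have hM : ∀ {p}, p ∈ M ↔ f p.1 = .inl p.2 := fun {p} => by
    simp only [M, mem_filter, mem_product, mem_univ, mem_biUnion, true_and]
    refine ⟨And.right, fun hp => ⟨⟨p.1, by simpa [hp] using hft p.1⟩, hp⟩⟩
  refine ⟨M, ⟨fun p hp => ?_, fun p hp q hq hpq => ?_, fun p hp q hq hpq => ?_⟩, ?_⟩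
  · simpa [hM.1 hp] using hft p.1
  · exact Prod.ext hpq (Sum.inl_injective ((hM.1 hp).symm.trans (hpq ▸ hM.1 hq)))
  · exact Prod.ext (hf ((hM.1 hp).trans (hpq ▸ (hM.1 hq).symm))) hpq
  · set R := univ.filter fun i => (f i).isRight
    have hR : #R ≤ d := by
      simpa using card_le_card_of_injOn f (t := univ.map .inr) (fun i hi => by
        obtain ⟨j, hj⟩ := Sum.isRight_iff.1 (mem_filter.1 hi).2
        simp [hj]) hf.injOn
    have hcover : univ ⊆ M.image Prod.fst ∪ R := fun i _ => by
      rcases hi : f i with a | j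
      · exact mem_union_left _ (mem_image.2 ⟨(i, a), hM.2 hi, rfl⟩)
      · exact mem_union_right _ (mem_filter.2 ⟨mem_univ i, by simp [hi]⟩)
    calc Fintype.card ι ≤ #(M.image Prod.fst ∪ R) := card_le_card hcover
      _ ≤ #M + d := (card_union_le _ _).trans (add_le_add card_image_le hR)

theorem Finset.exists_isRelMatching_card_le_add_deficiency {ι α : Type*} [Fintype ι]
    [DecidableEq α] (t : ι → Finset α) :
    ∃ s : Finset ι, ∃ M : Finset (ι × α), IsRelMatching (fun i a => a ∈ t i) M ∧
      Fintype.card ι ≤ #M + (#s - #(s.biUnion t)) := by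
  obtain ⟨s, -, hs⟩ :=
    exists_max_image univ (fun s : Finset ι => #s - #(s.biUnion t)) univ_nonempty
  obtain ⟨M, hM, hcard⟩ :=
    exists_isRelMatching_of_card_le_card_biUnion_add t (#s - #(s.biUnion t)) fun s' => by
      have := hs s' (mem_univ _)
      omega
  exact ⟨s, M, hM, hcard⟩

theorem exists_isAntichain_isRelMatching_card_le_add {α : Type*} [Fintype α]
    (r : α → α → Prop) :
    ∃ A : Finset α, ∃ M : Finset (α × α), IsAntichain r (A : Set α) ∧ IsRelMatching r M ∧
      Fintype.card α ≤ #A + #M := by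
  classical
  obtain ⟨s, M, hM, hcard⟩ :=
    exists_isRelMatching_card_le_add_deficiency fun a => univ.filter (r a)
  refine ⟨s \ s.biUnion (fun a => univ.filter (r a)), M, ?_, by simpa using hM, ?_⟩
  · intro u hu v hv _ huv
    simp only [coe_sdiff, Set.mem_sdiff, mem_coe, mem_biUnion, mem_filter, mem_univ, true_and,
      not_exists, not_and] at hu hv
    exact hv.2 u hu.1 huv
  · have := le_card_sdiff (s.biUnion fun a => univ.filter (r a)) s
    omega

theorem isAntichainSet_iff {E : V → V → Prop} {A : Finset V} :
    IsAntichainSet E A ↔ IsAntichain (Relation.TransGen E) (A : Set V) := by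
  refine ⟨fun h u hu v hv huv huv' => (h u hu v hv huv).1 huv'.to_reflTransGen,
    fun h u hu v hv huv => ?_⟩
  simp only [Relation.reflTransGen_iff_eq_or_transGen, huv, huv.symm, false_or]
  exact ⟨h hu hv huv, h hv hu huv.symm⟩

theorem isReachMatching_iff {E : V → V → Prop} {M : Finset (V × V)} :
    IsReachMatching E M ↔ IsRelMatching (Relation.TransGen E) M := by
  refine and_congr_right' ⟨fun h => ⟨?_, ?_⟩, fun ⟨hfst, hsnd⟩ p hp q hq hpq =>
    ⟨fun h => hpq (hfst hp hq h), fun h => hpq (hsnd hp hq h)⟩⟩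
  · exact fun p hp q hq hpq => of_not_not fun hne => (h p hp q hq hne).1 hpq
  · exact fun p hp q hq hpq => of_not_not fun hne => (h p hp q hq hne).2 hpq

theorem fulkerson_width_eq_card_sub_matching [Fintype V] (E : V → V → Prop)
    (hdag : ∀ v : V, ¬ Relation.TransGen E v v)
    (w : ℕ) (hw : IsWidth E w)
    (M : Finset (V × V)) (hM : IsReachMatching E M)
    (hmax : ∀ M' : Finset (V × V), IsReachMatching E M' → M'.card ≤ M.card) :
    w = Fintype.card V - M.card := by
  have : IsStrictOrder V (Relation.TransGen E) := { irrefl := hdag }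
  obtain ⟨⟨A, hA, rfl⟩, hwidth⟩ := hw
  have hAM : A.card + M.card ≤ Fintype.card V :=
    (isAntichainSet_iff.1 hA).card_add_card_le_of_isRelMatching (isReachMatching_iff.1 hM)
  obtain ⟨B, M', hB, hM', hBM'⟩ :=
    exists_isAntichain_isRelMatching_card_le_add (Relation.TransGen E)
  have hBA : B.card ≤ A.card := hwidth B (isAntichainSet_iff.2 hB)
  have hM'M : M'.card ≤ M.card := hmax M' (isReachMatching_iff.2 hM')
  omega
end
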